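/- arXiv:1806.03428 — 2 statements merged into one kernel-verified Lean document; each statement's English description precedes it below -/
import Mathlib

section
/- Let (X, d) be a geodesic metric space and μ an Ahlfors d_H-regular Borel measure on X. Let E ⊆ X have compact topological boundary ∂E, let δ > 0, and assume there exist C₀ > 0 and ε₀ > 0 such that μ((∂E)_ε) ≤ C₀ ε^{δ} for every 0 < ε ≤ ε₀, where (∂E)_ε = { x ∈ X : d(x, ∂E) < ε }. Then there exists a constant c₇ > 0 such that for every ε > 0: (μ⊗μ)({ (x,y) ∈ (X∖E) × E : d(x,y) < ε }) ≤ c₇ ( ε^{d_H+δ} + ε^{2 d_H} ). -/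
/-!
If `x ∉ E`, `y ∈ E` and `d(x, y) < ε`, the geodesic from `x` to `y` crosses `∂E`, so `x` lies in
the `ε`-neighbourhood `(∂E)_ε` and `y` in `B(x, ε)`. Fubini then bounds the measure of the pairs by
`μ((∂E)_ε) · c₂ ε^{d_H}`. For `ε ≤ ε₀` the hypothesis gives `μ((∂E)_ε) ≤ C₀ ε^δ`; for `ε > ε₀`,
`(∂E)_ε` is covered by the `2ε`-balls around a finite `ε₀`-net of the compact set `∂E`, so
`μ((∂E)_ε) ≲ ε^{d_H}`. The lower Ahlfors bound makes `X` separable, which is what makes the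
set of pairs measurable in `X × X`.
-/

open MeasureTheory ENNReal Metric Filter

noncomputable section

namespace BesovDirichlet

variable {X : Type*} [MeasurableSpace X]

/-- A heat kernel on a measure space: jointly measurable, nonnegative, symmetric,
satisfying the semigroup property and conservative. -/
structure IsHeatKernel (μ : Measure X) (K : ℝ → X → X → ℝ) : Prop where
  measurable : ∀ t : ℝ, Measurable fun xy : X × X => K t xy.1 xy.2
  nonneg : ∀ (t : ℝ) (x y : X), 0 ≤ K t x y
  symm : ∀ (t : ℝ) (x y : X), K t x y = K t y x
  semigroup : ∀ s t : ℝ, 0 < s → 0 < t →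
    ∀ᵐ xy ∂(μ.prod μ), (∫ z, K t xy.1 z * K s z xy.2 ∂μ) = K (t + s) xy.1 xy.2
  conservative : ∀ t : ℝ, 0 < t → ∀ᵐ x ∂μ, (∫ y, K t x y ∂μ) = 1

/-- The heat semigroup `P_t f (x) = ∫ p_t(x,y) f(y) dμ(y)`. -/
def heatOp (μ : Measure X) (K : ℝ → X → X → ℝ) (t : ℝ) (f : X → ℝ) (x : X) : ℝ :=
  ∫ y, K t x y * f y ∂μ

/-- The double integral `∫∫ |f(x) − f(y)|^p p_t(x,y) dμ(x) dμ(y)` as an extended real. -/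
def besovEnergy (μ : Measure X) (K : ℝ → X → X → ℝ) (p t : ℝ) (f : X → ℝ) : ℝ≥0∞ :=
  ∫⁻ x, (∫⁻ y, ENNReal.ofReal (|f x - f y| ^ p) * ENNReal.ofReal (K t x y) ∂μ) ∂μ

/-- The heat-semigroup Besov seminorm `‖f‖_{p,α}`. -/
def besovSeminorm (μ : Measure X) (K : ℝ → X → X → ℝ) (p α : ℝ) (f : X → ℝ) : ℝ≥0∞ :=
  ⨆ (t : ℝ) (_ : 0 < t), ENNReal.ofReal (t ^ (-α)) * besovEnergy μ K p t f ^ (1 / p)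

/-- Membership in the Besov space `B^{p,α}(X)`. -/
def MemBesov (μ : Measure X) (K : ℝ → X → X → ℝ) (p α : ℝ) (f : X → ℝ) : Prop :=
  MemLp f (ENNReal.ofReal p) μ ∧ besovSeminorm μ K p α f ≠ ∞

/-- Ahlfors `d_H`-regularity of the measure `μ`. -/
def AhlforsRegular [PseudoMetricSpace X] (μ : Measure X) (c₁ c₂ dH : ℝ) : Prop :=
  ∀ (x : X) (r : ℝ), 0 < r →
    ENNReal.ofReal (c₁ * r ^ dH) ≤ μ (Metric.ball x r) ∧
      μ (Metric.ball x r) ≤ ENNReal.ofReal (c₂ * r ^ dH)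

/-- Upper sub-Gaussian heat kernel estimate with parameters `d_H, d_W` and constants `c₃, c₄`. -/
def SubGaussianUpperBound [PseudoMetricSpace X] (μ : Measure X) (K : ℝ → X → X → ℝ)
    (c₃ c₄ dH dW : ℝ) : Prop :=
  ∀ t : ℝ, 0 < t → ∀ᵐ xy ∂(μ.prod μ),
    K t xy.1 xy.2 ≤ c₃ * t ^ (-(dH / dW)) *
      Real.exp (-c₄ * (dist xy.1 xy.2 ^ dW / t) ^ (1 / (dW - 1)))

/-- Lower sub-Gaussian heat kernel estimate with parameters `d_H, d_W` and constants `c₅, c₆`. -/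
def SubGaussianLowerBound [PseudoMetricSpace X] (μ : Measure X) (K : ℝ → X → X → ℝ)
    (c₅ c₆ dH dW : ℝ) : Prop :=
  ∀ t : ℝ, 0 < t → ∀ᵐ xy ∂(μ.prod μ),
    c₅ * t ^ (-(dH / dW)) *
        Real.exp (-c₆ * (dist xy.1 xy.2 ^ dW / t) ^ (1 / (dW - 1))) ≤ K t xy.1 xy.2

/-- The metric Besov quantity `N_p^β(f,r) = r^{−(β+d_H/p)} (∬_{d(x,y)<r} |f(x)−f(y)|^p)^{1/p}`. -/
def metricBesovN [PseudoMetricSpace X] (μ : Measure X) (dH p β : ℝ) (f : X → ℝ) (r : ℝ) :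
    ℝ≥0∞ :=
  ENNReal.ofReal (r ^ (-(β + dH / p))) *
    (∫⁻ x, (∫⁻ y in Metric.ball x r, ENNReal.ofReal (|f x - f y| ^ p) ∂μ) ∂μ) ^ (1 / p)

section

open Set

theorem _root_.IsPreconnected.inter_frontier_nonempty {X : Type*} [TopologicalSpace X] {s E : Set X}
    (hs : IsPreconnected s) (hin : (s ∩ E).Nonempty) (hout : (s \ E).Nonempty) :
    (s ∩ frontier E).Nonempty := by
  by_contra! hempty
  have hclosure : ∀ z ∈ s, z ∈ closure E → z ∈ interior E := fun z hz hzE => by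
    by_contra hzi
    exact eq_empty_iff_forall_notMem.1 hempty z ⟨hz, hzE, hzi⟩
  obtain ⟨y, hys, hyE⟩ := hin
  obtain ⟨x, hxs, hxE⟩ := hout
  have hcover : s ⊆ interior E ∪ (closure E)ᶜ := fun z hz =>
    (em (z ∈ closure E)).imp (hclosure z hz) id
  obtain ⟨z, -, hzi, hzc⟩ := hs _ _ isOpen_interior isClosed_closure.isOpen_compl hcover
    ⟨y, hys, hclosure y hys (subset_closure hyE)⟩
    ⟨x, hxs, fun hx => hxE (interior_subset (hclosure x hxs hx))⟩
  exact hzc (interior_subset_closure hzi)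

def _root_.IsGeodesicSpace (X : Type*) [PseudoMetricSpace X] : Prop :=
  ∀ x y : X, ∃ f : ℝ → X, f 0 = x ∧ f (dist x y) = y ∧
    ∀ s ∈ Icc (0 : ℝ) (dist x y), ∀ t ∈ Icc (0 : ℝ) (dist x y), dist (f s) (f t) = |s - t|

theorem _root_.IsGeodesicSpace.exists_mem_frontier_dist_le {X : Type*} [PseudoMetricSpace X]
    (hgeo : IsGeodesicSpace X) {E : Set X} {x y : X} (hx : x ∉ E) (hy : y ∈ E) :
    ∃ z ∈ frontier E, dist x z ≤ dist x y := by
  obtain ⟨f, rfl, hfy, hiso⟩ := hgeo x y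
  have hD : (0 : ℝ) ≤ dist (f 0) y := dist_nonneg
  have hcont : ContinuousOn f (Icc 0 (dist (f 0) y)) :=
    (LipschitzOnWith.of_dist_le_mul (K := 1) fun s hs t ht => by
      simp [hiso s hs t ht, Real.dist_eq]).continuousOn
  obtain ⟨-, ⟨t, ht, rfl⟩, hzf⟩ := (isPreconnected_Icc.image f hcont).inter_frontier_nonempty
    ⟨y, ⟨_, right_mem_Icc.2 hD, hfy⟩, hy⟩ ⟨f 0, ⟨0, left_mem_Icc.2 hD, rfl⟩, hx⟩
  refine ⟨f t, hzf, ?_⟩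
  rw [hiso 0 (left_mem_Icc.2 hD) t ht, zero_sub, abs_neg, abs_of_nonneg ht.1]
  exact ht.2

theorem _root_.IsGeodesicSpace.setOf_dist_lt_across_subset {X : Type*} [PseudoMetricSpace X]
    (hgeo : IsGeodesicSpace X) (E : Set X) (ε : ℝ) :
    {p : X × X | p.1 ∉ E ∧ p.2 ∈ E ∧ dist p.1 p.2 < ε} ⊆
      {p | p.1 ∈ thickening ε (frontier E) ∧ dist p.1 p.2 < ε} := by
  rintro ⟨x, y⟩ ⟨hx, hy, hxy⟩
  obtain ⟨z, hz, hxz⟩ := hgeo.exists_mem_frontier_dist_le hx hy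
  exact ⟨mem_thickening_iff.2 ⟨z, hz, hxz.trans_lt hxy⟩, hxy⟩

section MeasureOfBalls

variable [PseudoMetricSpace X]

/-- Disjoint balls of positive measure are countably many, and a maximal disjoint family of
`ε/4`-balls is `ε`-dense. -/
theorem _root_.secondCountableTopology_of_measure_ball_pos [OpensMeasurableSpace X]
    (μ : Measure X) [SFinite μ] (hpos : ∀ (x : X) (r : ℝ), 0 < r → 0 < μ (ball x r)) :
    SecondCountableTopology X := by
  refine secondCountable_of_almost_dense_set fun ε hε => ?_
  obtain ⟨u, -, hdisj, hcover⟩ := Vitali.exists_disjoint_subfamily_covering_enlargement_ball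
    (univ : Set X) id (fun _ => ε / 4) (ε / 4) (fun _ _ => le_rfl) 4 (by norm_num)
  refine ⟨u, ?_, fun x => ?_⟩
  · have hcount := Measure.countable_meas_pos_of_disjoint_iUnion (μ := μ)
      (As := fun b : u => ball (b : X) (ε / 4)) (fun _ => measurableSet_ball)
      (pairwise_subtype_iff_pairwise_set u _ |>.2 hdisj)
    simp only [hpos _ _ (by positivity : 0 < ε / 4), ofPred_true, countable_univ_iff] at hcount
    exact countable_coe_iff.1 hcount
  · obtain ⟨b, hb, hsub⟩ := hcover x (mem_univ x)
    refine ⟨b, hb, le_of_lt ?_⟩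
    simpa [mul_div_cancel₀] using hsub (mem_ball_self (by positivity))

theorem _root_.MeasureTheory.Measure.prod_setOf_fst_mem_dist_lt_le [OpensMeasurableSpace X]
    [SecondCountableTopology X] (μ ν : Measure X) [SFinite ν] {S : Set X} (hS : MeasurableSet S)
    {r : ℝ} {M : ℝ≥0∞}
    (hball : ∀ x ∈ S, ν (ball x r) ≤ M) :
    μ.prod ν {p : X × X | p.1 ∈ S ∧ dist p.1 p.2 < r} ≤ μ S * M := by
  have hmeas : MeasurableSet {p : X × X | p.1 ∈ S ∧ dist p.1 p.2 < r} :=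
    (measurable_fst hS).inter (isOpen_lt continuous_dist continuous_const).measurableSet
  rw [Measure.prod_apply hmeas, mul_comm, ← lintegral_indicator_const hS]
  refine lintegral_mono fun x => ?_
  by_cases hx : x ∈ S
  · rw [indicator_of_mem hx]
    exact (measure_mono fun y hy => mem_ball'.2 hy.2).trans (hball x hx)
  · simp [hx]

variable {μ : Measure X} {c₂ dH : ℝ}

/-- At scales `ε ≥ ε₀`, the `ε`-neighbourhood of a compact set is covered by boundedly many
balls of radius `2ε`. -/
theorem _root_.IsCompact.exists_measure_thickening_le {F : Set X} (hF : IsCompact F) {ε₀ : ℝ}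
    (hε₀ : 0 < ε₀) (hc₂ : 0 ≤ c₂)
    (hball : ∀ (x : X) (r : ℝ), 0 < r → μ (ball x r) ≤ ENNReal.ofReal (c₂ * r ^ dH)) :
    ∃ K : ℝ, 0 ≤ K ∧ ∀ ε, ε₀ ≤ ε → μ (thickening ε F) ≤ ENNReal.ofReal (K * ε ^ dH) := by
  obtain ⟨t, -, ht, hcover⟩ := finite_cover_balls_of_compact hF hε₀
  lift t to Finset X using ht
  refine ⟨t.card * (c₂ * 2 ^ dH), by positivity, fun ε hε => ?_⟩
  have hsub : thickening ε F ⊆ ⋃ z ∈ t, ball z (2 * ε) := fun x hx => by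
    obtain ⟨w, hw, hxw⟩ := mem_thickening_iff.1 hx
    obtain ⟨z, hz, hwz⟩ := mem_iUnion₂.1 (hcover hw)
    refine mem_iUnion₂.2 ⟨z, hz, ?_⟩
    rw [mem_ball] at hwz ⊢
    linarith [dist_triangle x w z]
  calc μ (thickening ε F) ≤ ∑ z ∈ t, μ (ball z (2 * ε)) :=
        (measure_mono hsub).trans (measure_biUnion_finset_le t _)
    _ ≤ ∑ _z ∈ t, ENNReal.ofReal (c₂ * (2 * ε) ^ dH) :=
        Finset.sum_le_sum fun z _ => hball z _ (by linarith)
    _ = ENNReal.ofReal (t.card * (c₂ * 2 ^ dH) * ε ^ dH) := by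
        rw [Finset.sum_const, nsmul_eq_mul, ← ENNReal.ofReal_natCast,
          ← ENNReal.ofReal_mul (by positivity), Real.mul_rpow (by norm_num) (by linarith)]
        ring_nf

theorem _root_.IsCompact.exists_measure_thickening_le_add {F : Set X} (hF : IsCompact F) {ε₀ : ℝ}
    (hε₀ : 0 < ε₀) (hc₂ : 0 ≤ c₂)
    (hball : ∀ (x : X) (r : ℝ), 0 < r → μ (ball x r) ≤ ENNReal.ofReal (c₂ * r ^ dH))
    {C₀ δ : ℝ} (hC₀ : 0 ≤ C₀)
    (hsmall : ∀ ε, 0 < ε → ε ≤ ε₀ → μ (thickening ε F) ≤ ENNReal.ofReal (C₀ * ε ^ δ)) :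
    ∃ K : ℝ, 0 ≤ K ∧ ∀ ε, 0 < ε →
      μ (thickening ε F) ≤ ENNReal.ofReal (C₀ * ε ^ δ + K * ε ^ dH) := by
  obtain ⟨K, hK, hlarge⟩ := hF.exists_measure_thickening_le hε₀ hc₂ hball
  refine ⟨K, hK, fun ε hε => ?_⟩
  rcases le_total ε ε₀ with hle | hge
  · exact (hsmall ε hε hle).trans <|
      ENNReal.ofReal_le_ofReal (le_add_of_nonneg_right (by positivity))
  · exact (hlarge ε hge).trans <|
      ENNReal.ofReal_le_ofReal (le_add_of_nonneg_left (by positivity))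

end MeasureOfBalls

end

theorem boundary_neighborhood_bound_general
    {X : Type*} [MetricSpace X] [MeasurableSpace X] [BorelSpace X]
    (μ : Measure X) [SigmaFinite μ]
    (dH c₁ c₂ : ℝ) (hc₁ : 0 < c₁) (hc₂ : 0 < c₂)
    (hA : AhlforsRegular μ c₁ c₂ dH)
    (hgeo : ∀ x y : X, ∃ f : ℝ → X, f 0 = x ∧ f (dist x y) = y ∧
      ∀ s ∈ Set.Icc (0 : ℝ) (dist x y), ∀ t ∈ Set.Icc (0 : ℝ) (dist x y),
        dist (f s) (f t) = |s - t|)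
    (E : Set X) (hcomp : IsCompact (frontier E))
    (δ : ℝ) (C₀ ε₀ : ℝ) (hC₀ : 0 < C₀) (hε₀ : 0 < ε₀)
    (hnb : ∀ ε : ℝ, 0 < ε → ε ≤ ε₀ →
      μ {x | Metric.infDist x (frontier E) < ε} ≤ ENNReal.ofReal (C₀ * ε ^ δ)) :
    ∃ c₇ : ℝ, 0 < c₇ ∧ ∀ ε : ℝ, 0 < ε →
      (μ.prod μ) {xy : X × X | xy.1 ∉ E ∧ xy.2 ∈ E ∧ dist xy.1 xy.2 < ε} ≤
        ENNReal.ofReal (c₇ * (ε ^ (dH + δ) + ε ^ (2 * dH))) := by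
  have hball : ∀ (x : X) (r : ℝ), 0 < r → μ (ball x r) ≤ ENNReal.ofReal (c₂ * r ^ dH) :=
    fun x r hr => (hA x r hr).2
  have : SecondCountableTopology X := secondCountableTopology_of_measure_ball_pos μ
    fun x r hr => (ENNReal.ofReal_pos.2 (by positivity)).trans_le (hA x r hr).1
  have hsmall ε (hε : 0 < ε) (hle : ε ≤ ε₀) :
      μ (thickening ε (frontier E)) ≤ ENNReal.ofReal (C₀ * ε ^ δ) := by
    refine (measure_mono fun x hx => ?_).trans (hnb ε hε hle)
    obtain ⟨z, hz, hxz⟩ := mem_thickening_iff.1 hx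
    exact (infDist_le_dist_of_mem hz).trans_lt hxz
  obtain ⟨K, hK, hthick⟩ := hcomp.exists_measure_thickening_le_add hε₀ hc₂.le
    hball hC₀.le hsmall
  refine ⟨c₂ * C₀ + c₂ * K, by positivity, fun ε hε => ?_⟩
  calc (μ.prod μ) {xy : X × X | xy.1 ∉ E ∧ xy.2 ∈ E ∧ dist xy.1 xy.2 < ε}
      ≤ (μ.prod μ) {xy : X × X | xy.1 ∈ thickening ε (frontier E) ∧ dist xy.1 xy.2 < ε} :=
        measure_mono (IsGeodesicSpace.setOf_dist_lt_across_subset hgeo E ε)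
    _ ≤ μ (thickening ε (frontier E)) * ENNReal.ofReal (c₂ * ε ^ dH) :=
        Measure.prod_setOf_fst_mem_dist_lt_le μ μ isOpen_thickening.measurableSet
          fun x _ => hball x ε hε
    _ ≤ ENNReal.ofReal (C₀ * ε ^ δ + K * ε ^ dH) * ENNReal.ofReal (c₂ * ε ^ dH) :=
        mul_le_mul_left (hthick ε hε) _
    _ = ENNReal.ofReal ((C₀ * ε ^ δ + K * ε ^ dH) * (c₂ * ε ^ dH)) :=
        (ENNReal.ofReal_mul (by positivity)).symm
    _ ≤ ENNReal.ofReal ((c₂ * C₀ + c₂ * K) * (ε ^ (dH + δ) + ε ^ (2 * dH))) := by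
        refine ENNReal.ofReal_le_ofReal ?_
        rw [Real.rpow_add hε, two_mul, Real.rpow_add hε]
        have hC₀_term : 0 ≤ c₂ * C₀ * (ε ^ dH * ε ^ dH) := by positivity
        have hK_term : 0 ≤ c₂ * K * (ε ^ dH * ε ^ δ) := by positivity
        linarith

/-- **Boundary neighborhood bound in geodesic Ahlfors-regular spaces.** If `E` has compact
topological boundary and `μ((∂E)_ε) ≤ C₀ ε^δ` for all small `ε > 0`, then there is
`c₇ > 0` with `(μ⊗μ)({(x,y) ∈ Eᶜ × E : d(x,y) < ε}) ≤ c₇ (ε^{d_H+δ} + ε^{2d_H})` for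
every `ε > 0`. -/
theorem boundary_neighborhood_bound
    {X : Type*} [MetricSpace X] [MeasurableSpace X] [BorelSpace X]
    (μ : Measure X) [SigmaFinite μ]
    (dH c₁ c₂ : ℝ) (hdH : 0 < dH) (hc₁ : 0 < c₁) (hc₂ : 0 < c₂)
    (hA : AhlforsRegular μ c₁ c₂ dH)
    (hgeo : ∀ x y : X, ∃ f : ℝ → X, f 0 = x ∧ f (dist x y) = y ∧
      ∀ s ∈ Set.Icc (0 : ℝ) (dist x y), ∀ t ∈ Set.Icc (0 : ℝ) (dist x y),
        dist (f s) (f t) = |s - t|)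
    (E : Set X) (hcomp : IsCompact (frontier E))
    (δ : ℝ) (hδ : 0 < δ) (C₀ ε₀ : ℝ) (hC₀ : 0 < C₀) (hε₀ : 0 < ε₀)
    (hnb : ∀ ε : ℝ, 0 < ε → ε ≤ ε₀ →
      μ {x | Metric.infDist x (frontier E) < ε} ≤ ENNReal.ofReal (C₀ * ε ^ δ)) :
    ∃ c₇ : ℝ, 0 < c₇ ∧ ∀ ε : ℝ, 0 < ε →
      (μ.prod μ) {xy : X × X | xy.1 ∉ E ∧ xy.2 ∈ E ∧ dist xy.1 xy.2 < ε} ≤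
        ENNReal.ofReal (c₇ * (ε ^ (dH + δ) + ε ^ (2 * dH))) :=
  boundary_neighborhood_bound_general μ dH c₁ c₂ hc₁ hc₂ hA hgeo E hcomp δ C₀ ε₀ hC₀ hε₀ hnb

end BesovDirichlet
end
end

section
/- Assume μ is Ahlfors d_H-regular and the heat kernel satisfies the two-sided non-local estimates. Let p ∈ [1,∞) and α ∈ [0, 1/p). Then there exist constants c, C > 0, depending only on p, α and the structural constants, such that every f ∈ L^p(X,μ) satisfies c · sup_{r>0} N_p^{α d_W}(f,r) ≤ ‖f‖_{p,α} ≤ C · sup_{r>0} N_p^{α d_W}(f,r); in particular B^{p,α}(X) = { f ∈ L^p(X,μ) : sup_{r>0} N_p^{α d_W}(f,r) < ∞ }. -/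
/-!
Both inequalities compare `p_t` with indicators of balls at the scale `r = t^{1/d_W}`.
On `d(x,y) < r` the lower estimate gives `p_t(x,y) ≳ r^{-d_H}`, so the energy at time `t`
dominates `r^{-d_H}` times the double integral over `Δ_r`. Conversely the upper estimate gives
`p_t(x,y) ≲ r^{-d_H} 2^{-k(d_H+d_W)}` on the shell `2^{k-1} r ≤ d(x,y) < 2^k r`, and the double integral over
`Δ_{2^k r}` is at most `(2^k r)^{α d_W p + d_H} (sup N)^p`; the resulting series is geometric
with ratio `2^{d_W(αp-1)} < 1` because `α < 1/p`.

Exchanging the sum with the outer integral needs the ball integrals to be measurable, hence `X`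
separable: under the lower Ahlfors bound every ball has positive measure, and a σ-finite measure
admits only countably many disjoint such balls, so maximal `ε`-separated sets are countable.
-/

open MeasureTheory ENNReal Metric Filter

noncomputable section

namespace BesovDirichlet

variable {X : Type*} [MeasurableSpace X]

/-- Upper non-local heat kernel estimate. -/
def NonLocalUpperBound [PseudoMetricSpace X] (μ : Measure X) (K : ℝ → X → X → ℝ)
    (c₃ c₄ dH dW : ℝ) : Prop :=
  ∀ t : ℝ, 0 < t → ∀ᵐ xy ∂(μ.prod μ),
    K t xy.1 xy.2 ≤ c₃ * t ^ (-(dH / dW)) *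
      (1 + c₄ * dist xy.1 xy.2 / t ^ (1 / dW)) ^ (-(dH + dW))

/-- Lower non-local heat kernel estimate. -/
def NonLocalLowerBound [PseudoMetricSpace X] (μ : Measure X) (K : ℝ → X → X → ℝ)
    (c₅ c₆ dH dW : ℝ) : Prop :=
  ∀ t : ℝ, 0 < t → ∀ᵐ xy ∂(μ.prod μ),
    c₅ * t ^ (-(dH / dW)) *
        (1 + c₆ * dist xy.1 xy.2 / t ^ (1 / dW)) ^ (-(dH + dW)) ≤ K t xy.1 xy.2

lemma secondCountableTopology_of_isOpenPosMeasure [PseudoMetricSpace X] [OpensMeasurableSpace X]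
    (μ : Measure X) [SFinite μ] [μ.IsOpenPosMeasure] : SecondCountableTopology X := by
  refine secondCountable_of_almost_dense_set fun ε hε => ?_
  obtain ⟨N, hN⟩ := zorn_subset {N : Set X | IsSeparated (ENNReal.ofReal ε) N} fun c hc hchain =>
    ⟨⋃₀ c, (Set.pairwise_sUnion hchain.directedOn).2 hc, fun _ => Set.subset_sUnion_of_mem⟩
  have hcover : IsCover (Real.toNNReal ε) Set.univ N :=
    .of_maximal_isSeparated ⟨⟨N.subset_univ, hN.1⟩, fun N' hN' hle => hN.2 hN'.2 hle⟩
  have hdisj : Pairwise (Function.onFun Disjoint fun y : N => ball (y : X) (ε / 2)) := by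
    rintro ⟨y, hy⟩ ⟨z, hz⟩ hyz
    have hsep : ENNReal.ofReal ε < edist y z := hN.1 hy hz (fun h => hyz (Subtype.ext h))
    rw [edist_dist, ENNReal.ofReal_lt_ofReal_iff_of_nonneg hε.le] at hsep
    exact ball_disjoint_ball (by linarith)
  refine ⟨N, ?_, fun x => ?_⟩
  · have := Measure.countable_meas_pos_of_disjoint_iUnion (μ := μ)
      (fun y : N => measurableSet_ball) hdisj
    simp only [Metric.measure_ball_pos μ _ (half_pos hε), Set.ofPred_true] at this
    exact Set.countable_coe_iff.1 (Set.countable_univ_iff.1 this)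
  · obtain ⟨y, hy, hxy⟩ := hcover (Set.mem_univ x)
    replace hxy : edist x y ≤ Real.toNNReal ε := hxy
    rw [edist_dist, ← ENNReal.ofReal_coe_nnreal, Real.coe_toNNReal _ hε.le,
      ENNReal.ofReal_le_ofReal_iff hε.le] at hxy
    exact ⟨y, hy, hxy⟩

lemma AhlforsRegular.isOpenPosMeasure [PseudoMetricSpace X] {μ : Measure X} {c₁ c₂ dH : ℝ}
    (hAR : AhlforsRegular μ c₁ c₂ dH) (hc₁ : 0 < c₁) : μ.IsOpenPosMeasure := by
  refine ⟨fun U hU ⟨x, hx⟩ => ?_⟩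
  obtain ⟨r, hr, hrU⟩ := Metric.isOpen_iff.1 hU x hx
  have hball : 0 < μ (ball x r) := (ENNReal.ofReal_pos.2 (by positivity)).trans_le (hAR x r hr).1
  exact (hball.trans_le (measure_mono hrU)).ne'

section BallEnergy

variable [PseudoMetricSpace X]

def ballEnergy (μ : Measure X) (p : ℝ) (f : X → ℝ) (r : ℝ) : ℝ≥0∞ :=
  ∫⁻ x, ∫⁻ y in ball x r, ENNReal.ofReal (|f x - f y| ^ p) ∂μ ∂μ

lemma metricBesovN_eq (μ : Measure X) (dH p β : ℝ) (f : X → ℝ) (r : ℝ) :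
    metricBesovN μ dH p β f r =
      ENNReal.ofReal (r ^ (-(β + dH / p))) * ballEnergy μ p f r ^ (1 / p) :=
  rfl

lemma measurable_lintegral_ball [SecondCountableTopology X] [OpensMeasurableSpace X]
    {μ : Measure X} [SFinite μ] {F : X × X → ℝ≥0∞} (hF : Measurable F) (r : ℝ) :
    Measurable fun x => ∫⁻ y in ball x r, F (x, y) ∂μ := by
  have hball : MeasurableSet {z : X × X | dist z.2 z.1 < r} :=
    measurableSet_lt (measurable_snd.dist measurable_fst) measurable_const
  simp_rw [← lintegral_indicator measurableSet_ball]
  exact (hF.indicator hball).lintegral_prod_right'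

lemma aemeasurable_lintegral_ball [SecondCountableTopology X] [OpensMeasurableSpace X]
    {μ : Measure X} [SFinite μ] {f : X → ℝ} (hf : AEMeasurable f μ) (p r : ℝ) :
    AEMeasurable (fun x => ∫⁻ y in ball x r, ENNReal.ofReal (|f x - f y| ^ p) ∂μ) μ := by
  have hg : Measurable fun z : X × X => ENNReal.ofReal (|hf.mk f z.1 - hf.mk f z.2| ^ p) := by
    fun_prop
  refine ⟨_, measurable_lintegral_ball (μ := μ) hg r, ?_⟩
  filter_upwards [hf.ae_eq_mk] with x hx
  refine lintegral_congr_ae ?_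
  filter_upwards [ae_restrict_of_ae hf.ae_eq_mk] with y hy
  rw [hx, hy]

end BallEnergy

lemma exists_lt_two_pow_and_le_one_add_mul {c s : ℝ} (hc : 0 < c) (hs : 0 ≤ s) :
    ∃ k : ℕ, s < 2 ^ k ∧ min 1 c / 2 * 2 ^ k ≤ 1 + c * s := by
  rcases lt_or_ge s 1 with hs1 | hs1
  · exact ⟨0, by simpa using hs1, by nlinarith [min_le_left 1 c]⟩
  obtain ⟨n, hn, hn1⟩ := exists_nat_pow_near hs1 one_lt_two
  refine ⟨n + 1, hn1, ?_⟩
  calc min 1 c / 2 * 2 ^ (n + 1) = min 1 c * 2 ^ n := by ring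
    _ ≤ c * s := mul_le_mul (min_le_right _ _) hn (by positivity) hc.le
    _ ≤ 1 + c * s := by linarith

lemma rpow_rpow_neg_div {r : ℝ} (hr : 0 ≤ r) (a : ℝ) {b : ℝ} (hb : b ≠ 0) :
    (r ^ b) ^ (-(a / b)) = r ^ (-a) := by
  rw [← Real.rpow_mul hr]
  congr 1
  field_simp

section KernelBounds

variable [PseudoMetricSpace X] {μ : Measure X} {K : ℝ → X → X → ℝ} {dH dW r : ℝ}

lemma NonLocalLowerBound.ae_le_of_dist_lt {c₅ c₆ : ℝ} (hLB : NonLocalLowerBound μ K c₅ c₆ dH dW)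
    (hdW : 0 < dW) (hdHW : 0 ≤ dH + dW) (hc₅ : 0 ≤ c₅) (hc₆ : 0 ≤ c₆) (hr : 0 < r) :
    ∀ᵐ xy ∂μ.prod μ, dist xy.1 xy.2 < r →
      c₅ * (1 + c₆) ^ (-(dH + dW)) * r ^ (-dH) ≤ K (r ^ dW) xy.1 xy.2 := by
  filter_upwards [hLB _ (Real.rpow_pos_of_pos hr dW)] with xy hxy hdist
  rw [rpow_rpow_neg_div hr.le _ hdW.ne', one_div, Real.rpow_rpow_inv hr.le hdW.ne'] at hxy
  refine le_trans ?_ hxy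
  rw [mul_right_comm]
  refine mul_le_mul_of_nonneg_left
    (Real.rpow_le_rpow_of_nonpos (by positivity) ?_ (neg_nonpos.2 hdHW)) (by positivity)
  have : c₆ * dist xy.1 xy.2 / r ≤ c₆ := by
    rw [div_le_iff₀ hr]
    exact mul_le_mul_of_nonneg_left hdist.le hc₆
  linarith

lemma NonLocalUpperBound.ae_exists_le_dyadic {c₃ c₄ : ℝ}
    (hUB : NonLocalUpperBound μ K c₃ c₄ dH dW) (hdW : 0 < dW) (hdHW : 0 ≤ dH + dW)
    (hc₃ : 0 ≤ c₃) (hc₄ : 0 < c₄) (hr : 0 < r) :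
    ∀ᵐ xy ∂μ.prod μ, ∃ k : ℕ, dist xy.1 xy.2 < 2 ^ k * r ∧
      K (r ^ dW) xy.1 xy.2 ≤ c₃ * r ^ (-dH) * (min 1 c₄ / 2 * 2 ^ k) ^ (-(dH + dW)) := by
  filter_upwards [hUB _ (Real.rpow_pos_of_pos hr dW)] with xy hxy
  rw [rpow_rpow_neg_div hr.le _ hdW.ne', one_div, Real.rpow_rpow_inv hr.le hdW.ne',
    mul_div_assoc] at hxy
  obtain ⟨k, hk, hk'⟩ :=
    exists_lt_two_pow_and_le_one_add_mul (s := dist xy.1 xy.2 / r) hc₄ (by positivity)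
  refine ⟨k, (div_lt_iff₀ hr).1 hk, hxy.trans ?_⟩
  exact mul_le_mul_of_nonneg_left
    (Real.rpow_le_rpow_of_nonpos (by positivity) hk' (neg_nonpos.2 hdHW)) (by positivity)

end KernelBounds

lemma rpow_neg_mul_rpow_mul_two_pow_rpow {m r : ℝ} (hm : 0 < m) (hr : 0 < r) (a b c : ℝ)
    (k : ℕ) :
    r ^ (-a) * (m * 2 ^ k) ^ (-b) * (2 ^ k * r) ^ c =
      m ^ (-b) * r ^ (c - a) * ((2 : ℝ) ^ (c - b)) ^ k := by
  have h2k : (0 : ℝ) < 2 ^ k := by positivity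
  rw [Real.mul_rpow hm.le h2k.le, Real.mul_rpow h2k.le hr.le, Real.rpow_pow_comm zero_lt_two.le,
    sub_eq_add_neg, sub_eq_add_neg, Real.rpow_add hr, Real.rpow_add h2k]
  ring

section EnergyBounds

variable [PseudoMetricSpace X] [OpensMeasurableSpace X] {μ : Measure X} {K : ℝ → X → X → ℝ}
  {dH dW p r : ℝ}

lemma ofReal_mul_ballEnergy_le_besovEnergy [SFinite μ] {c₅ c₆ : ℝ}
    (hLB : NonLocalLowerBound μ K c₅ c₆ dH dW) (hdW : 0 < dW) (hdHW : 0 ≤ dH + dW)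
    (hc₅ : 0 ≤ c₅) (hc₆ : 0 ≤ c₆) (hr : 0 < r) (f : X → ℝ) :
    ENNReal.ofReal (c₅ * (1 + c₆) ^ (-(dH + dW)) * r ^ (-dH)) * ballEnergy μ p f r ≤
      besovEnergy μ K p (r ^ dW) f := by
  rw [ballEnergy, besovEnergy, ← lintegral_const_mul' _ _ ENNReal.ofReal_ne_top]
  refine lintegral_mono_ae ?_
  filter_upwards [Measure.ae_ae_of_ae_prod (hLB.ae_le_of_dist_lt hdW hdHW hc₅ hc₆ hr)] with x hx
  rw [← lintegral_const_mul' _ _ ENNReal.ofReal_ne_top]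
  refine (setLIntegral_mono_ae' measurableSet_ball ?_).trans
    (setLIntegral_le_lintegral (ball x r) _)
  filter_upwards [hx] with y hy hyball
  rw [mul_comm]
  exact mul_le_mul_right (ENNReal.ofReal_le_ofReal (hy (mem_ball'.1 hyball))) _

lemma besovEnergy_le_tsum_ballEnergy [SecondCountableTopology X] [SFinite μ] {c₃ c₄ : ℝ}
    (hUB : NonLocalUpperBound μ K c₃ c₄ dH dW) (hdW : 0 < dW) (hdHW : 0 ≤ dH + dW)
    (hc₃ : 0 ≤ c₃) (hc₄ : 0 < c₄) (hr : 0 < r) {f : X → ℝ} (hf : AEMeasurable f μ) :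
    besovEnergy μ K p (r ^ dW) f ≤
      ∑' k : ℕ, ENNReal.ofReal (c₃ * r ^ (-dH) * (min 1 c₄ / 2 * 2 ^ k) ^ (-(dH + dW))) *
        ballEnergy μ p f (2 ^ k * r) := by
  set a : ℕ → ℝ≥0∞ :=
    fun k => ENNReal.ofReal (c₃ * r ^ (-dH) * (min 1 c₄ / 2 * 2 ^ k) ^ (-(dH + dW)))
  have hpointwise : ∀ᵐ x ∂μ,
      ∫⁻ y, ENNReal.ofReal (|f x - f y| ^ p) * ENNReal.ofReal (K (r ^ dW) x y) ∂μ ≤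
        ∑' k, a k * ∫⁻ y in ball x (2 ^ k * r), ENNReal.ofReal (|f x - f y| ^ p) ∂μ := by
    filter_upwards [Measure.ae_ae_of_ae_prod (hUB.ae_exists_le_dyadic hdW hdHW hc₃ hc₄ hr)]
      with x hx
    have hg : AEMeasurable (fun y => ENNReal.ofReal (|f x - f y| ^ p)) μ := by fun_prop
    calc ∫⁻ y, ENNReal.ofReal (|f x - f y| ^ p) * ENNReal.ofReal (K (r ^ dW) x y) ∂μ
        ≤ ∫⁻ y, ∑' k, a k * (ball x (2 ^ k * r)).indicator
            (fun y => ENNReal.ofReal (|f x - f y| ^ p)) y ∂μ := by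
          refine lintegral_mono_ae ?_
          filter_upwards [hx] with y ⟨k, hdist, hK⟩
          refine le_trans ?_ (ENNReal.le_tsum k)
          rw [Set.indicator_of_mem (mem_ball'.2 hdist), mul_comm]
          exact mul_le_mul_left (ENNReal.ofReal_le_ofReal hK) _
      _ = ∑' k, a k * ∫⁻ y in ball x (2 ^ k * r), ENNReal.ofReal (|f x - f y| ^ p) ∂μ := by
          rw [lintegral_tsum fun k => (hg.indicator measurableSet_ball).const_mul _]
          refine tsum_congr fun k => ?_
          rw [lintegral_const_mul' _ _ ENNReal.ofReal_ne_top,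
            lintegral_indicator measurableSet_ball]
  calc besovEnergy μ K p (r ^ dW) f
      ≤ ∫⁻ x, ∑' k, a k * ∫⁻ y in ball x (2 ^ k * r), ENNReal.ofReal (|f x - f y| ^ p) ∂μ ∂μ :=
        lintegral_mono_ae hpointwise
    _ = ∑' k, a k * ballEnergy μ p f (2 ^ k * r) := by
        rw [lintegral_tsum fun k => (aemeasurable_lintegral_ball hf p _).const_mul _]
        exact tsum_congr fun k => lintegral_const_mul' _ _ ENNReal.ofReal_ne_top

end EnergyBounds

section Comparison

variable [PseudoMetricSpace X] {μ : Measure X} {K : ℝ → X → X → ℝ} {dH dW p α r : ℝ}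

lemma ballEnergy_le_ofReal_mul_iSup_metricBesovN (β : ℝ) (hp : 0 < p) (f : X → ℝ) {ρ : ℝ}
    (hρ : 0 < ρ) :
    ballEnergy μ p f ρ ≤ ENNReal.ofReal (ρ ^ (β * p + dH)) *
      (⨆ (r : ℝ) (_ : 0 < r), metricBesovN μ dH p β f r) ^ p := by
  have hN : metricBesovN μ dH p β f ρ ≤ ⨆ (r : ℝ) (_ : 0 < r), metricBesovN μ dH p β f r :=
    le_iSup₂ (f := fun r (_ : 0 < r) => metricBesovN μ dH p β f r) ρ hρ
  have hroot : ballEnergy μ p f ρ ^ (1 / p) =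
      ENNReal.ofReal (ρ ^ (β + dH / p)) * metricBesovN μ dH p β f ρ := by
    rw [metricBesovN_eq, ← mul_assoc, ← ENNReal.ofReal_mul (by positivity), ← Real.rpow_add hρ,
      add_neg_cancel, Real.rpow_zero, ENNReal.ofReal_one, one_mul]
  calc ballEnergy μ p f ρ = (ballEnergy μ p f ρ ^ (1 / p)) ^ p := by
        rw [← ENNReal.rpow_mul, one_div_mul_cancel hp.ne', ENNReal.rpow_one]
    _ ≤ (ENNReal.ofReal (ρ ^ (β + dH / p)) *
          ⨆ (r : ℝ) (_ : 0 < r), metricBesovN μ dH p β f r) ^ p := by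
        rw [hroot]
        gcongr
    _ = _ := by
        rw [ENNReal.mul_rpow_of_nonneg _ _ hp.le,
          ENNReal.ofReal_rpow_of_nonneg (by positivity) hp.le, ← Real.rpow_mul hρ.le]
        congr 3
        field_simp

lemma besovEnergy_le_ofReal_mul_iSup_metricBesovN [OpensMeasurableSpace X]
    [SecondCountableTopology X] [SFinite μ] {c₃ c₄ : ℝ}
    (hUB : NonLocalUpperBound μ K c₃ c₄ dH dW) (hdW : 0 < dW) (hdHW : 0 ≤ dH + dW)
    (hc₃ : 0 ≤ c₃) (hc₄ : 0 < c₄) (hp : 0 < p) (hαp : α * p < 1) (hr : 0 < r) {f : X → ℝ}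
    (hf : AEMeasurable f μ) :
    besovEnergy μ K p (r ^ dW) f ≤
      ENNReal.ofReal (c₃ * (min 1 c₄ / 2) ^ (-(dH + dW)) * (1 - 2 ^ (dW * (α * p - 1)))⁻¹ *
          r ^ (α * dW * p)) *
        (⨆ (ρ : ℝ) (_ : 0 < ρ), metricBesovN μ dH p (α * dW) f ρ) ^ p := by
  set S := ⨆ (ρ : ℝ) (_ : 0 < ρ), metricBesovN μ dH p (α * dW) f ρ
  set θ : ℝ := 2 ^ (dW * (α * p - 1))
  set A : ℝ := c₃ * (min 1 c₄ / 2) ^ (-(dH + dW)) * r ^ (α * dW * p)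
  have hm : 0 < min 1 c₄ / 2 := by positivity
  have hθ0 : 0 ≤ θ := by positivity
  have hθ1 : θ < 1 := Real.rpow_lt_one_of_one_lt_of_neg one_lt_two (by nlinarith)
  have hterm : ∀ k : ℕ,
      ENNReal.ofReal (c₃ * r ^ (-dH) * (min 1 c₄ / 2 * 2 ^ k) ^ (-(dH + dW))) *
          ballEnergy μ p f (2 ^ k * r) ≤ ENNReal.ofReal (A * θ ^ k) * S ^ p := by
    intro k
    calc _ ≤ ENNReal.ofReal (c₃ * r ^ (-dH) * (min 1 c₄ / 2 * 2 ^ k) ^ (-(dH + dW))) *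
          (ENNReal.ofReal ((2 ^ k * r) ^ (α * dW * p + dH)) * S ^ p) := by
          gcongr
          exact ballEnergy_le_ofReal_mul_iSup_metricBesovN _ hp f (by positivity)
      _ = ENNReal.ofReal (A * θ ^ k) * S ^ p := by
          rw [← mul_assoc, ← ENNReal.ofReal_mul (by positivity)]
          simp only [mul_assoc c₃]
          rw [rpow_neg_mul_rpow_mul_two_pow_rpow hm hr]
          congr 2
          simp only [A, θ]
          ring_nf
  calc besovEnergy μ K p (r ^ dW) f
      ≤ ∑' k : ℕ, ENNReal.ofReal (c₃ * r ^ (-dH) * (min 1 c₄ / 2 * 2 ^ k) ^ (-(dH + dW))) *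
          ballEnergy μ p f (2 ^ k * r) :=
        besovEnergy_le_tsum_ballEnergy hUB hdW hdHW hc₃ hc₄ hr hf
    _ ≤ ∑' k : ℕ, ENNReal.ofReal (A * θ ^ k) * S ^ p := ENNReal.tsum_le_tsum hterm
    _ = ENNReal.ofReal (A * (1 - θ)⁻¹) * S ^ p := by
        rw [ENNReal.tsum_mul_right, ← ENNReal.ofReal_tsum_of_nonneg (fun k => by positivity)
          ((summable_geometric_of_lt_one hθ0 hθ1).mul_left A), tsum_mul_left,
          tsum_geometric_of_lt_one hθ0 hθ1]
    _ = _ := by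
        congr 2
        simp only [A, θ]
        ring

lemma ofReal_mul_metricBesovN_le [OpensMeasurableSpace X] [SFinite μ] {c₅ c₆ : ℝ}
    (hLB : NonLocalLowerBound μ K c₅ c₆ dH dW) (hdW : 0 < dW) (hdHW : 0 ≤ dH + dW)
    (hc₅ : 0 ≤ c₅) (hc₆ : 0 ≤ c₆) (hp : 0 < p) (hr : 0 < r) (f : X → ℝ) :
    ENNReal.ofReal ((c₅ * (1 + c₆) ^ (-(dH + dW))) ^ (1 / p)) * metricBesovN μ dH p (α * dW) f r ≤
      ENNReal.ofReal ((r ^ dW) ^ (-α)) * besovEnergy μ K p (r ^ dW) f ^ (1 / p) := by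
  set B := c₅ * (1 + c₆) ^ (-(dH + dW))
  have hB : 0 ≤ B := by positivity
  calc _ = ENNReal.ofReal ((r ^ dW) ^ (-α)) *
        (ENNReal.ofReal (B * r ^ (-dH)) * ballEnergy μ p f r) ^ (1 / p) := by
        rw [metricBesovN_eq, ENNReal.mul_rpow_of_nonneg _ _ (by positivity),
          ENNReal.ofReal_rpow_of_nonneg (by positivity) (by positivity), ← mul_assoc, ← mul_assoc,
          ← ENNReal.ofReal_mul (by positivity), ← ENNReal.ofReal_mul (by positivity)]
        congr 2
        rw [Real.mul_rpow hB (by positivity), ← Real.rpow_mul hr.le, ← Real.rpow_mul hr.le,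
          mul_left_comm, ← Real.rpow_add hr]
        ring_nf
    _ ≤ _ := by
        gcongr
        exact ofReal_mul_ballEnergy_le_besovEnergy hLB hdW hdHW hc₅ hc₆ hr f

lemma ofReal_mul_besovEnergy_le [OpensMeasurableSpace X] [SecondCountableTopology X] [SFinite μ]
    {c₃ c₄ : ℝ} (hUB : NonLocalUpperBound μ K c₃ c₄ dH dW) (hdW : 0 < dW) (hdHW : 0 ≤ dH + dW)
    (hc₃ : 0 ≤ c₃) (hc₄ : 0 < c₄) (hp : 0 < p) (hαp : α * p < 1) (hr : 0 < r) {f : X → ℝ}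
    (hf : AEMeasurable f μ) :
    ENNReal.ofReal ((r ^ dW) ^ (-α)) * besovEnergy μ K p (r ^ dW) f ^ (1 / p) ≤
      ENNReal.ofReal ((c₃ * (min 1 c₄ / 2) ^ (-(dH + dW)) *
          (1 - 2 ^ (dW * (α * p - 1)))⁻¹) ^ (1 / p)) *
        ⨆ (ρ : ℝ) (_ : 0 < ρ), metricBesovN μ dH p (α * dW) f ρ := by
  set C := c₃ * (min 1 c₄ / 2) ^ (-(dH + dW)) * (1 - 2 ^ (dW * (α * p - 1)))⁻¹
  have hθ1 : (2 : ℝ) ^ (dW * (α * p - 1)) < 1 :=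
    Real.rpow_lt_one_of_one_lt_of_neg one_lt_two (by nlinarith)
  have hC : 0 ≤ C := by
    have : 0 < 1 - (2 : ℝ) ^ (dW * (α * p - 1)) := by linarith
    positivity
  calc _ ≤ ENNReal.ofReal ((r ^ dW) ^ (-α)) * (ENNReal.ofReal (C * r ^ (α * dW * p)) *
        (⨆ (ρ : ℝ) (_ : 0 < ρ), metricBesovN μ dH p (α * dW) f ρ) ^ p) ^ (1 / p) := by
        gcongr
        exact besovEnergy_le_ofReal_mul_iSup_metricBesovN hUB hdW hdHW hc₃ hc₄ hp hαp hr hf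
    _ = _ := by
        rw [ENNReal.mul_rpow_of_nonneg _ _ (by positivity),
          ENNReal.ofReal_rpow_of_nonneg (by positivity) (by positivity), ← ENNReal.rpow_mul,
          mul_one_div_cancel hp.ne', ENNReal.rpow_one, ← mul_assoc,
          ← ENNReal.ofReal_mul (by positivity)]
        congr 2
        rw [Real.mul_rpow hC (by positivity), ← Real.rpow_mul hr.le, ← Real.rpow_mul hr.le,
          mul_left_comm, ← Real.rpow_add hr]
        have hexp : dW * -α + α * dW * p * (1 / p) = 0 := by field_simp; ring
        rw [hexp, Real.rpow_zero, mul_one]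

lemma ofReal_mul_iSup_metricBesovN_le_besovSeminorm [OpensMeasurableSpace X] [SFinite μ]
    {c₅ c₆ : ℝ} (hLB : NonLocalLowerBound μ K c₅ c₆ dH dW) (hdW : 0 < dW) (hdHW : 0 ≤ dH + dW)
    (hc₅ : 0 ≤ c₅) (hc₆ : 0 ≤ c₆) (hp : 0 < p) (f : X → ℝ) :
    ENNReal.ofReal ((c₅ * (1 + c₆) ^ (-(dH + dW))) ^ (1 / p)) *
        (⨆ (r : ℝ) (_ : 0 < r), metricBesovN μ dH p (α * dW) f r) ≤
      besovSeminorm μ K p α f := by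
  simp_rw [ENNReal.mul_iSup]
  refine iSup₂_le fun r hr => (ofReal_mul_metricBesovN_le hLB hdW hdHW hc₅ hc₆ hp hr f).trans ?_
  exact le_iSup₂ (f := fun t (_ : 0 < t) =>
    ENNReal.ofReal (t ^ (-α)) * besovEnergy μ K p t f ^ (1 / p)) _ (by positivity)

lemma besovSeminorm_le_ofReal_mul_iSup_metricBesovN [OpensMeasurableSpace X]
    [SecondCountableTopology X] [SFinite μ] {c₃ c₄ : ℝ}
    (hUB : NonLocalUpperBound μ K c₃ c₄ dH dW) (hdW : 0 < dW) (hdHW : 0 ≤ dH + dW)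
    (hc₃ : 0 ≤ c₃) (hc₄ : 0 < c₄) (hp : 0 < p) (hαp : α * p < 1) {f : X → ℝ}
    (hf : AEMeasurable f μ) :
    besovSeminorm μ K p α f ≤
      ENNReal.ofReal ((c₃ * (min 1 c₄ / 2) ^ (-(dH + dW)) *
          (1 - 2 ^ (dW * (α * p - 1)))⁻¹) ^ (1 / p)) *
        ⨆ (r : ℝ) (_ : 0 < r), metricBesovN μ dH p (α * dW) f r := by
  refine iSup₂_le fun t ht => ?_
  rw [← Real.rpow_inv_rpow ht.le hdW.ne']
  exact ofReal_mul_besovEnergy_le hUB hdW hdHW hc₃ hc₄ hp hαp (by positivity) hf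

end Comparison

lemma ne_top_iff_of_ofReal_mul_le_of_le_ofReal_mul {a b : ℝ≥0∞} {c C : ℝ} (hc : 0 < c)
    (hlow : ENNReal.ofReal c * a ≤ b) (hup : b ≤ ENNReal.ofReal C * a) : b ≠ ∞ ↔ a ≠ ∞ := by
  refine ⟨fun hb ha => hb (top_unique ?_),
    fun ha => ne_top_of_le_ne_top (mul_ne_top ofReal_ne_top ha) hup⟩
  rwa [ha, mul_top (ofReal_pos.2 hc).ne'] at hlow

theorem nonlocal_besov_characterization_general
    (dH dW c₁ c₂ c₃ c₄ c₅ c₆ p α : ℝ)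
    (hdH : 0 < dH) (hdW0 : 0 < dW)
    (hc₁ : 0 < c₁) (hc₃ : 0 < c₃) (hc₄ : 0 < c₄)
    (hc₅ : 0 < c₅) (hc₆ : 0 < c₆)
    (hp : 1 ≤ p) (hα1 : α < 1 / p) :
    ∃ c C : ℝ, 0 < c ∧ 0 < C ∧
      ∀ (X : Type) [MetricSpace X] [MeasurableSpace X] [BorelSpace X]
        (μ : Measure X) [SigmaFinite μ] (K : ℝ → X → X → ℝ),
        IsHeatKernel μ K → AhlforsRegular μ c₁ c₂ dH →
        NonLocalUpperBound μ K c₃ c₄ dH dW →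
        NonLocalLowerBound μ K c₅ c₆ dH dW →
        ∀ f : X → ℝ, MemLp f (ENNReal.ofReal p) μ →
          (ENNReal.ofReal c * (⨆ (r : ℝ) (_ : 0 < r), metricBesovN μ dH p (α * dW) f r) ≤
              besovSeminorm μ K p α f ∧
            besovSeminorm μ K p α f ≤
              ENNReal.ofReal C * (⨆ (r : ℝ) (_ : 0 < r), metricBesovN μ dH p (α * dW) f r)) ∧
          (MemBesov μ K p α f ↔
            (⨆ (r : ℝ) (_ : 0 < r), metricBesovN μ dH p (α * dW) f r) ≠ ∞) := by
  have hp0 : 0 < p := by linarith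
  have hdHW : 0 ≤ dH + dW := by linarith
  have hαp : α * p < 1 := (lt_div_iff₀ hp0).1 (by rwa [one_div] at hα1 ⊢)
  have hθ : 0 < 1 - (2 : ℝ) ^ (dW * (α * p - 1)) :=
    sub_pos.2 (Real.rpow_lt_one_of_one_lt_of_neg one_lt_two (by nlinarith))
  refine ⟨(c₅ * (1 + c₆) ^ (-(dH + dW))) ^ (1 / p),
    (c₃ * (min 1 c₄ / 2) ^ (-(dH + dW)) * (1 - 2 ^ (dW * (α * p - 1)))⁻¹) ^ (1 / p),
    by positivity, by positivity, ?_⟩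
  intro X _ _ _ μ _ K _ hAR hUB hLB f hf
  have := hAR.isOpenPosMeasure hc₁
  have := secondCountableTopology_of_isOpenPosMeasure μ
  have hlow :=
    ofReal_mul_iSup_metricBesovN_le_besovSeminorm (α := α) hLB hdW0 hdHW hc₅.le hc₆.le hp0 f
  have hup := besovSeminorm_le_ofReal_mul_iSup_metricBesovN hUB hdW0 hdHW hc₃.le hc₄ hp0 hαp
    hf.aestronglyMeasurable.aemeasurable
  exact ⟨⟨hlow, hup⟩, (and_iff_right hf).trans
    (ne_top_iff_of_ofReal_mul_le_of_le_ofReal_mul (by positivity) hlow hup)⟩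

/-- **Characterization of Besov spaces under non-local heat kernel estimates.**
For `p ∈ [1,∞)` and `α ∈ [0,1/p)` there are constants `c, C > 0` depending only on
`p, α` and the structural constants such that
`c sup_{r>0} N_p^{αd_W}(f,r) ≤ ‖f‖_{p,α} ≤ C sup_{r>0} N_p^{αd_W}(f,r)` for every
`f ∈ L^p(X,μ)`; in particular `B^{p,α}(X) = {f ∈ L^p : sup_{r>0} N_p^{αd_W}(f,r) < ∞}`. -/
theorem nonlocal_besov_characterization
    (dH dW c₁ c₂ c₃ c₄ c₅ c₆ p α : ℝ)
    (hdH : 0 < dH) (hdW0 : 0 < dW) (hdW1 : dW ≤ dH + 1)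
    (hc₁ : 0 < c₁) (hc₂ : 0 < c₂) (hc₃ : 0 < c₃) (hc₄ : 0 < c₄)
    (hc₅ : 0 < c₅) (hc₆ : 0 < c₆)
    (hp : 1 ≤ p) (hα0 : 0 ≤ α) (hα1 : α < 1 / p) :
    ∃ c C : ℝ, 0 < c ∧ 0 < C ∧
      ∀ (X : Type) [MetricSpace X] [MeasurableSpace X] [BorelSpace X]
        (μ : Measure X) [SigmaFinite μ] (K : ℝ → X → X → ℝ),
        IsHeatKernel μ K → AhlforsRegular μ c₁ c₂ dH →
        NonLocalUpperBound μ K c₃ c₄ dH dW →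
        NonLocalLowerBound μ K c₅ c₆ dH dW →
        ∀ f : X → ℝ, MemLp f (ENNReal.ofReal p) μ →
          (ENNReal.ofReal c * (⨆ (r : ℝ) (_ : 0 < r), metricBesovN μ dH p (α * dW) f r) ≤
              besovSeminorm μ K p α f ∧
            besovSeminorm μ K p α f ≤
              ENNReal.ofReal C * (⨆ (r : ℝ) (_ : 0 < r), metricBesovN μ dH p (α * dW) f r)) ∧
          (MemBesov μ K p α f ↔
            (⨆ (r : ℝ) (_ : 0 < r), metricBesovN μ dH p (α * dW) f r) ≠ ∞) :=
  nonlocal_besov_characterization_general dH dW c₁ c₂ c₃ c₄ c₅ c₆ p α hdH hdW0 hc₁ hc₃ hc₄ hc₅ hc₆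
    hp hα1

end BesovDirichlet
end
end
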